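/- arXiv:1612.08146 — 2 statements merged into one kernel-verified Lean document; each statement's English description precedes it below -/
import Mathlib

section
/- The Motzkin number M_n is divisible by 11 if and only if n has one of the forms (11i+9)·11^{2j−1} − 2, (11i+1)·11^{2j} − 2, (11i+2)·11^{2j−1} − 1, or (11i+10)·11^{2j} − 1, where i, j are natural numbers with j ≥ 1. -/
/-!
Over `ZMod 11` the Frobenius gives `(1 + X + X²)^(11a+b) = (1 + X¹¹ + X²²)^a (1 + X + X²)^b`,
so the trinomial coefficients `T(n, k) = [Xᵏ] (1 + X + X²)ⁿ` obey Lucas-type recursions in the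
base-11 digits of `n`. Since `M_n = T(n, n) - T(n, n + 2)`, this gives `M_{11a+b} ≡ T(a, a) M_b`
for `b ≤ 8`, while for `b = 9, 10` the residue is `T(a, a)` times an affine function of
`ρ(a) = T(a, a + 1) / T(a, a)`. The central coefficients never vanish mod 11, and
`ρ(11a + b) = ρ(b)` for `b ≤ 9`, `ρ(11a + 10) = -1 - ρ(a)`; so `ρ(a)` is read off from the
last nonzero base-11 digit of `a + 1` and the parity of the 11-adic valuation of `a + 1`.
-/

open Finset

def motzkin (n : ℕ) : ℕ := ∑ k ∈ Finset.range (n + 1), n.choose (2 * k) * catalan k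

open Polynomial

-- From `((1 + X²) + X)ⁿ`: `j` factors contribute `1` or `X²`, the other `n - j` give `X`.
def trinomialCoeff (n k : ℕ) : ℕ :=
  ∑ j ∈ range (n + 1),
    n.choose j * if n ≤ k + j ∧ 2 ∣ k + j - n then j.choose ((k + j - n) / 2) else 0

theorem coeff_one_add_X_sq_pow (R : Type*) [CommSemiring R] (j l : ℕ) :
    ((1 + X ^ 2 : R[X]) ^ j).coeff l = if 2 ∣ l then (j.choose (l / 2) : R) else 0 := by
  have : (1 + X ^ 2 : R[X]) ^ j = expand R 2 ((1 + X) ^ j) := by simp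
  rw [this, coeff_expand two_pos, coeff_one_add_X_pow]

theorem coeff_one_add_X_add_X_sq_pow (R : Type*) [CommSemiring R] (n k : ℕ) :
    ((1 + X + X ^ 2 : R[X]) ^ n).coeff k = trinomialCoeff n k := by
  rw [show (1 + X + X ^ 2 : R[X]) = (1 + X ^ 2) + X by ring, add_pow, finsetSum_coeff,
    trinomialCoeff, Nat.cast_sum]
  refine sum_congr rfl fun j hj => ?_
  have hjn : j ≤ n := Nat.lt_succ_iff.1 (mem_range.1 hj)
  rw [coeff_mul_natCast, coeff_mul_X_pow', coeff_one_add_X_sq_pow, mul_comm, Nat.cast_mul]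
  simp only [show n - j ≤ k ↔ n ≤ k + j by omega, show k - (n - j) = k + j - n by omega]
  split_ifs <;> simp_all

theorem sum_range_two_mul_of_odd_eq_zero {M : Type*} [AddCommMonoid M] (f : ℕ → M)
    (hf : ∀ k, f (2 * k + 1) = 0) (m : ℕ) :
    ∑ j ∈ range (2 * m), f j = ∑ k ∈ range m, f (2 * k) := by
  induction m with
  | zero => simp
  | succ m ih => rw [Nat.mul_succ, sum_range_succ, sum_range_succ, ih, hf, add_zero, sum_range_succ]

theorem trinomialCoeff_add_two_mul (n d : ℕ) :
    trinomialCoeff n (n + 2 * d) =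
      ∑ k ∈ range (n + 1), n.choose (2 * k) * (2 * k).choose (k + d) := by
  have hsum : trinomialCoeff n (n + 2 * d) =
      ∑ j ∈ range (2 * (n + 1)), n.choose j * if 2 ∣ j then j.choose (j / 2 + d) else 0 := by
    refine sum_subset_zero_on_sdiff (range_subset_range.2 (by omega)) (fun j hj => ?_)
      (fun j _ => ?_)
    · simp only [mem_sdiff, mem_range] at hj
      rw [Nat.choose_eq_zero_of_lt (by omega), zero_mul]
    · simp only [show n ≤ n + 2 * d + j by omega, show n + 2 * d + j - n = j + 2 * d by omega,
        true_and, Nat.dvd_add_left (dvd_mul_right 2 d), Nat.add_mul_div_left _ _ two_pos]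
  rw [hsum, sum_range_two_mul_of_odd_eq_zero _ fun k => by simp]
  simp

theorem choose_two_mul_self_eq_add_catalan (k : ℕ) :
    (2 * k).choose k = (2 * k).choose (k + 1) + catalan k := by
  have h1 : (2 * k).choose (k + 1) * (k + 1) = (2 * k).choose k * k := by
    rw [Nat.choose_succ_right_eq, show 2 * k - k = k by omega]
  have h2 : (k + 1) * catalan k = (2 * k).choose k := succ_mul_catalan_eq_centralBinom k
  apply Nat.eq_of_mul_eq_mul_left k.succ_pos
  linarith

theorem motzkin_add_trinomialCoeff (n : ℕ) :
    motzkin n + trinomialCoeff n (n + 2) = trinomialCoeff n n := by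
  have h0 := trinomialCoeff_add_two_mul n 0
  have h1 := trinomialCoeff_add_two_mul n 1
  simp only [mul_zero, add_zero, mul_one] at h0 h1
  rw [motzkin, h0, h1, ← sum_add_distrib]
  refine sum_congr rfl fun k _ => ?_
  rw [choose_two_mul_self_eq_add_catalan]
  ring

theorem natDegree_one_add_X_add_X_sq_pow_le (R : Type*) [Semiring R] (n : ℕ) :
    ((1 + X + X ^ 2 : R[X]) ^ n).natDegree ≤ 2 * n := by
  have h : (1 + X + X ^ 2 : R[X]).natDegree ≤ 2 := by compute_degree
  calc _ ≤ n * (1 + X + X ^ 2 : R[X]).natDegree := natDegree_pow_le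
    _ ≤ 2 * n := by rw [mul_comm]; exact Nat.mul_le_mul_right n h

section Expand

variable {R : Type*} [CommSemiring R] {p : ℕ} (q r : R[X])

theorem coeff_expand_mul_coeff_eq_zero (hp : 0 < p) {x y : ℕ}
    (h : ∀ c, x = p * c → r.natDegree < y) : (expand R p q).coeff x * r.coeff y = 0 := by
  rw [coeff_expand hp]
  split_ifs with hx
  · obtain ⟨c, rfl⟩ := hx
    rw [coeff_eq_zero_of_natDegree_lt (h c rfl), mul_zero]
  · rw [zero_mul]

theorem coeff_expand_mul_of_lt {a s : ℕ} (hs : s < p) (hr : r.natDegree < p + s) :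
    (expand R p q * r).coeff (p * a + s) = q.coeff a * r.coeff s := by
  have hp : 0 < p := by omega
  rw [coeff_mul, sum_eq_single (p * a, s), coeff_expand_mul' hp]
  · rintro ⟨x, y⟩ hxy hne
    rw [HasAntidiagonal.mem_antidiagonal] at hxy
    refine coeff_expand_mul_coeff_eq_zero q r hp fun c hc => ?_
    by_contra! hy
    have hca : c < a + 1 := Nat.lt_of_mul_lt_mul_left (a := p) (by rw [mul_add]; omega)
    have hac : a < c + 1 := Nat.lt_of_mul_lt_mul_left (a := p) (by rw [mul_add]; omega)
    obtain rfl : c = a := by omega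
    exact hne (by simp only [Prod.mk.injEq]; omega)
  · simp

theorem coeff_expand_mul_of_le {a s : ℕ} (hs : p ≤ s) (hs' : s < 2 * p)
    (hr : r.natDegree < 2 * p) :
    (expand R p q * r).coeff (p * a + s) =
      q.coeff a * r.coeff s + q.coeff (a + 1) * r.coeff (s - p) := by
  have hp : 0 < p := by omega
  have hne : (p * a, s) ≠ (p * (a + 1), s - p) := by simp only [ne_eq, Prod.mk.injEq]; omega
  have hsub : {(p * a, s), (p * (a + 1), s - p)} ⊆ antidiagonal (p * a + s) := by
    simp only [insert_subset_iff, singleton_subset_iff, HasAntidiagonal.mem_antidiagonal, mul_add,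
      mul_one, true_and]
    omega
  rw [coeff_mul, ← sum_subset hsub, sum_pair hne, coeff_expand_mul' hp, coeff_expand_mul' hp]
  rintro ⟨x, y⟩ hxy hnot
  simp only [HasAntidiagonal.mem_antidiagonal] at hxy
  simp only [mem_insert, mem_singleton, Prod.mk.injEq, not_or] at hnot
  refine coeff_expand_mul_coeff_eq_zero q r hp fun c hc => ?_
  by_contra! hy
  have hca : c < a + 2 := Nat.lt_of_mul_lt_mul_left (a := p) (by rw [mul_add]; omega)
  have hac : a < c + 1 := Nat.lt_of_mul_lt_mul_left (a := p) (by rw [mul_add]; omega)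
  obtain rfl | rfl : c = a ∨ c = a + 1 := by omega
  · exact hnot.1 ⟨hc, by omega⟩
  · exact hnot.2 ⟨hc, by rw [mul_add] at hc; omega⟩

end Expand

section Lucas

variable {p : ℕ} [Fact p.Prime] {a b s : ℕ}

theorem pow_mul_add_eq_expand_mul (f : (ZMod p)[X]) (a b : ℕ) :
    f ^ (p * a + b) = expand (ZMod p) p (f ^ a) * f ^ b := by
  rw [pow_add, pow_mul, ← ZMod.expand_card, map_pow]

theorem trinomialCoeff_mul_add_of_lt (hs : s < p) (hbs : 2 * b < p + s) :
    (trinomialCoeff (p * a + b) (p * a + s) : ZMod p) =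
      trinomialCoeff a a * trinomialCoeff b s := by
  simp only [← coeff_one_add_X_add_X_sq_pow]
  rw [pow_mul_add_eq_expand_mul, coeff_expand_mul_of_lt _ _ hs
    ((natDegree_one_add_X_add_X_sq_pow_le _ b).trans_lt hbs)]

theorem trinomialCoeff_mul_add_of_le (hb : b < p) (hs : p ≤ s) (hs' : s < 2 * p) :
    (trinomialCoeff (p * a + b) (p * a + s) : ZMod p) =
      trinomialCoeff a a * trinomialCoeff b s +
        trinomialCoeff a (a + 1) * trinomialCoeff b (s - p) := by
  simp only [← coeff_one_add_X_add_X_sq_pow]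
  rw [pow_mul_add_eq_expand_mul, coeff_expand_mul_of_le _ _ hs hs'
    ((natDegree_one_add_X_add_X_sq_pow_le _ b).trans_lt (by omega))]

theorem cast_motzkin (n : ℕ) :
    (motzkin n : ZMod p) = trinomialCoeff n n - trinomialCoeff n (n + 2) := by
  rw [eq_sub_iff_add_eq, ← Nat.cast_add, motzkin_add_trinomialCoeff]

theorem cast_motzkin_mul_add_of_lt (hb : b + 2 < p) :
    (motzkin (p * a + b) : ZMod p) = trinomialCoeff a a * motzkin b := by
  rw [cast_motzkin, cast_motzkin, add_assoc, trinomialCoeff_mul_add_of_lt (by omega) (by omega),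
    trinomialCoeff_mul_add_of_lt (by omega) (by omega), mul_sub]

end Lucas

section Eleven

instance fact_prime_eleven : Fact (Nat.Prime 11) := ⟨by norm_num⟩

theorem trinomialCoeff_self_ne_zero (a : ℕ) : (trinomialCoeff a a : ZMod 11) ≠ 0 := by
  have hdigit : ∀ b < 11, (trinomialCoeff b b : ZMod 11) ≠ 0 := by decide
  induction a using Nat.strong_induction_on with
  | _ a ih =>
    rcases lt_or_ge a 11 with ha | ha
    · exact hdigit a ha
    · rw [← Nat.div_add_mod a 11,
        trinomialCoeff_mul_add_of_lt (Nat.mod_lt _ (by norm_num)) (by omega)]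
      exact mul_ne_zero (ih _ (by omega)) (hdigit _ (Nat.mod_lt _ (by norm_num)))

theorem cast_motzkin_ne_zero {b : ℕ} (hb : b ≤ 8) : (motzkin b : ZMod 11) ≠ 0 := by
  have hdigit : ∀ b ≤ 8, (trinomialCoeff b b : ZMod 11) - trinomialCoeff b (b + 2) ≠ 0 := by
    decide
  rw [cast_motzkin]
  exact hdigit b hb

def centralRatio (n : ℕ) : ZMod 11 := (trinomialCoeff n (n + 1) : ZMod 11) / trinomialCoeff n n

theorem centralRatio_eq_iff_eq_mul (n : ℕ) (c : ZMod 11) :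
    centralRatio n = c ↔ (trinomialCoeff n (n + 1) : ZMod 11) = c * trinomialCoeff n n :=
  div_eq_iff (trinomialCoeff_self_ne_zero n)

theorem centralRatio_eleven_mul_add (a : ℕ) {b : ℕ} (hb : b ≤ 9) :
    centralRatio (11 * a + b) = centralRatio b := by
  rw [centralRatio, centralRatio, add_assoc, trinomialCoeff_mul_add_of_lt (by omega) (by omega),
    trinomialCoeff_mul_add_of_lt (by omega) (by omega),
    mul_div_mul_left _ _ (trinomialCoeff_self_ne_zero a)]

theorem centralRatio_eleven_mul_add_ten (a : ℕ) :
    centralRatio (11 * a + 10) = -1 - centralRatio a := by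
  have hdigit : (trinomialCoeff 10 10 : ZMod 11) = -1 ∧ (trinomialCoeff 10 11 : ZMod 11) = 1 ∧
      (trinomialCoeff 10 0 : ZMod 11) = 1 := by decide
  have ha := trinomialCoeff_self_ne_zero a
  rw [centralRatio, centralRatio, show 11 * a + 10 + 1 = 11 * a + 11 from rfl,
    trinomialCoeff_mul_add_of_le (by omega) le_rfl (by omega), Nat.sub_self,
    trinomialCoeff_mul_add_of_lt (by omega) (by omega), hdigit.1, hdigit.2.1, hdigit.2.2]
  field_simp
  ring

theorem cast_motzkin_eleven_mul_add_nine (a : ℕ) :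
    (motzkin (11 * a + 9) : ZMod 11) = -trinomialCoeff a a * (centralRatio a + 1) := by
  have hdigit : (trinomialCoeff 9 9 : ZMod 11) = 4 ∧ (trinomialCoeff 9 11 : ZMod 11) = 5 ∧
      (trinomialCoeff 9 0 : ZMod 11) = 1 := by decide
  have ha := trinomialCoeff_self_ne_zero a
  rw [cast_motzkin, show 11 * a + 9 + 2 = 11 * a + 11 from rfl,
    trinomialCoeff_mul_add_of_le (by omega) le_rfl (by omega), Nat.sub_self,
    trinomialCoeff_mul_add_of_lt (by omega) (by omega), hdigit.1, hdigit.2.1, hdigit.2.2,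
    centralRatio]
  field_simp
  ring

theorem cast_motzkin_eleven_mul_add_ten (a : ℕ) :
    (motzkin (11 * a + 10) : ZMod 11) = trinomialCoeff a a * (centralRatio a - 1) := by
  have hdigit : (trinomialCoeff 10 10 : ZMod 11) = -1 ∧ (trinomialCoeff 10 12 : ZMod 11) = 0 ∧
      (trinomialCoeff 10 1 : ZMod 11) = -1 := by decide
  have ha := trinomialCoeff_self_ne_zero a
  rw [cast_motzkin, show 11 * a + 10 + 2 = 11 * a + 12 from rfl,
    trinomialCoeff_mul_add_of_le (s := 12) (by omega) (by omega) (by omega),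
    show 12 - 11 = 1 from rfl, trinomialCoeff_mul_add_of_lt (by omega) (by omega), hdigit.1,
    hdigit.2.1, hdigit.2.2, centralRatio]
  field_simp
  ring

def ElevenAdicForm (u v N : ℕ) : Prop :=
  ∃ i j : ℕ, 1 ≤ j ∧
    (N = (11 * i + u) * 11 ^ (2 * j - 1) ∨ N = (11 * i + v) * 11 ^ (2 * j))

theorem ElevenAdicForm.eleven_dvd {u v N : ℕ} (h : ElevenAdicForm u v N) : 11 ∣ N := by
  obtain ⟨i, j, hj, rfl | rfl⟩ := h <;>
    exact Dvd.dvd.mul_left (dvd_pow_self 11 (by omega)) _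

theorem elevenAdicForm_eleven_mul_iff {u v M : ℕ} (hu : u < 11) (hM : ¬11 ∣ M) :
    ElevenAdicForm u v (11 * M) ↔ M % 11 = u := by
  refine ⟨?_, fun h => ⟨M / 11, 1, le_rfl, Or.inl (by omega)⟩⟩
  rintro ⟨i, j, hj, h | h⟩
  · rcases j with _ | _ | k
    · omega
    · norm_num at h
      omega
    · rw [show 2 * (k + 2) - 1 = 2 * k + 1 + 1 + 1 by omega, pow_succ, pow_succ] at h
      exact absurd ⟨(11 * i + u) * 11 ^ (2 * k + 1), by linarith⟩ hM
  · obtain ⟨k, rfl⟩ : ∃ k, j = k + 1 := ⟨j - 1, by omega⟩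
    rw [show 2 * (k + 1) = 2 * k + 1 + 1 by ring, pow_succ, pow_succ] at h
    exact absurd ⟨(11 * i + v) * 11 ^ (2 * k), by linarith⟩ hM

theorem elevenAdicForm_eleven_mul_eleven_mul_iff {u v M : ℕ} (hu : 0 < u) (hu' : u < 11) :
    ElevenAdicForm u v (11 * (11 * M)) ↔ ElevenAdicForm v u (11 * M) := by
  constructor
  · rintro ⟨i, j, hj, h | h⟩
    · rcases j with _ | _ | k
      · omega
      · norm_num at h
        omega
      · rw [show 2 * (k + 2) - 1 = 2 * (k + 1) + 1 by omega, pow_succ] at h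
        exact ⟨i, k + 1, by omega, Or.inr (by linarith)⟩
    · rw [← pow_sub_one_mul (by omega)] at h
      exact ⟨i, j, hj, Or.inl (by linarith)⟩
  · rintro ⟨i, j, hj, h | h⟩
    · refine ⟨i, j, hj, Or.inr ?_⟩
      rw [← pow_sub_one_mul (by omega), h]
      ring
    · refine ⟨i, j + 1, by omega, Or.inl ?_⟩
      rw [show 2 * (j + 1) - 1 = 2 * j + 1 by omega, pow_succ, h]
      ring

theorem centralRatio_eq_iff {c : ZMod 11} {u v : ℕ} (hu : 0 < u) (hu' : u < 11) (hv : 0 < v)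
    (hv' : v < 11)
    (hcu : ∀ b ≤ 9, (trinomialCoeff b (b + 1) : ZMod 11) = c * trinomialCoeff b b ↔ b + 1 = u)
    (hcv : ∀ b ≤ 9, (trinomialCoeff b (b + 1) : ZMod 11) = (-1 - c) * trinomialCoeff b b ↔
      b + 1 = v)
    (a : ℕ) :
    (centralRatio a = c ↔ ElevenAdicForm u v (11 * (a + 1))) ∧
      (centralRatio a = -1 - c ↔ ElevenAdicForm v u (11 * (a + 1))) := by
  induction a using Nat.strong_induction_on with
  | _ a ih =>
    obtain ⟨a, b, hb, rfl⟩ : ∃ a' b, b < 11 ∧ a = 11 * a' + b :=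
      ⟨a / 11, a % 11, Nat.mod_lt _ (by norm_num), (Nat.div_add_mod a 11).symm⟩
    rcases (by omega : b ≤ 9 ∨ b = 10) with hb | rfl
    · have hM : ¬11 ∣ 11 * a + b + 1 := by omega
      rw [centralRatio_eleven_mul_add a hb, elevenAdicForm_eleven_mul_iff hu' hM,
        elevenAdicForm_eleven_mul_iff hv' hM, show (11 * a + b + 1) % 11 = b + 1 by omega,
        centralRatio_eq_iff_eq_mul, centralRatio_eq_iff_eq_mul]
      exact ⟨hcu b hb, hcv b hb⟩
    · obtain ⟨ih₁, ih₂⟩ := ih a (by omega)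
      rw [centralRatio_eleven_mul_add_ten, show 11 * a + 10 + 1 = 11 * (a + 1) by ring,
        elevenAdicForm_eleven_mul_eleven_mul_iff hu hu',
        elevenAdicForm_eleven_mul_eleven_mul_iff hv hv', ← ih₁, ← ih₂]
      constructor <;> constructor <;> intro h <;> linear_combination -h

theorem centralRatio_eq_neg_one_iff (a : ℕ) :
    centralRatio a = -1 ↔ ElevenAdicForm 9 1 (11 * (a + 1)) :=
  (centralRatio_eq_iff (by norm_num) (by norm_num) (by norm_num) (by norm_num) (by decide)
    (by decide) a).1

theorem centralRatio_eq_one_iff (a : ℕ) :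
    centralRatio a = 1 ↔ ElevenAdicForm 2 10 (11 * (a + 1)) :=
  (centralRatio_eq_iff (by norm_num) (by norm_num) (by norm_num) (by norm_num) (by decide)
    (by decide) a).1

end Eleven

theorem motzkin_mod_eleven (n : ℕ) :
    11 ∣ motzkin n ↔
      ∃ i j : ℕ, 1 ≤ j ∧
        (n + 2 = (11 * i + 9) * 11 ^ (2 * j - 1) ∨
         n + 2 = (11 * i + 1) * 11 ^ (2 * j) ∨
         n + 1 = (11 * i + 2) * 11 ^ (2 * j - 1) ∨
         n + 1 = (11 * i + 10) * 11 ^ (2 * j)) := by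
  suffices (motzkin n : ZMod 11) = 0 ↔
      ElevenAdicForm 9 1 (n + 2) ∨ ElevenAdicForm 2 10 (n + 1) by
    simpa only [ElevenAdicForm, ← exists_or, ← and_or_left, or_assoc, ZMod.natCast_eq_zero_iff]
  obtain ⟨a, b, hb, rfl⟩ : ∃ a b, b < 11 ∧ n = 11 * a + b :=
    ⟨n / 11, n % 11, Nat.mod_lt _ (by norm_num), (Nat.div_add_mod n 11).symm⟩
  have ha := trinomialCoeff_self_ne_zero a
  rcases (by omega : b ≤ 8 ∨ b = 9 ∨ b = 10) with hb | rfl | rfl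
  · have h₂ : ¬ElevenAdicForm 9 1 (11 * a + b + 2) := mt ElevenAdicForm.eleven_dvd (by omega)
    have h₁ : ¬ElevenAdicForm 2 10 (11 * a + b + 1) := mt ElevenAdicForm.eleven_dvd (by omega)
    simp [cast_motzkin_mul_add_of_lt (by omega : b + 2 < 11), ha, cast_motzkin_ne_zero hb, h₁,
      h₂]
  · have h₁ : ¬ElevenAdicForm 2 10 (11 * a + 9 + 1) := mt ElevenAdicForm.eleven_dvd (by omega)
    rw [cast_motzkin_eleven_mul_add_nine, show 11 * a + 9 + 2 = 11 * (a + 1) by ring,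
      ← centralRatio_eq_neg_one_iff]
    simp [ha, h₁, add_eq_zero_iff_eq_neg]
  · have h₂ : ¬ElevenAdicForm 9 1 (11 * a + 10 + 2) := mt ElevenAdicForm.eleven_dvd (by omega)
    rw [cast_motzkin_eleven_mul_add_ten, show 11 * a + 10 + 1 = 11 * (a + 1) by ring,
      ← centralRatio_eq_one_iff]
    simp [ha, h₂, sub_eq_zero]
end

section
/- For every integer k ≥ 1, the Motzkin number M_{19^k − 2} is congruent to 0 modulo 19. -/
open Finset

open PowerSeries

/-
Over `ZMod p`, the series `F = 1 - X - 2 X² ∑ Mₙ Xⁿ` is the square root of `h = 1 - 2X - 3X²`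
with constant term `1`, because `M = ∑ Mₙ Xⁿ` satisfies `M = 1 + X M + X² M²`. Let `Λ` be the
Cartier operator `∑ aₙ Xⁿ ↦ ∑ a_{pn} Xⁿ`. Since `F ^ p = F(X ^ p)` and `Λ (G(X ^ p) * H) = G * Λ H`,
we get `h * Λ F = F * Λ (h ^ ((p + 1) / 2))`. For `p = 19` one computes `Λ (h ^ 10) = 1 - X`, and
differentiating `F² = h` gives `h * (F - X F') = (1 - X) F`. Hence `Λ F = F - X F'`, that is
`a_{pn} = (1 - n) aₙ` for the coefficients of `F`, so `a_{p^k} = 0` for `k ≥ 1`; finally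
`a_{n+2} = -2 Mₙ`.
-/

theorem Nat.sum_antidiagonal_choose_mul_choose (s t n : ℕ) :
    ∑ ij ∈ antidiagonal n, ij.1.choose s * ij.2.choose t = (n + 1).choose (s + t + 1) := by
  induction n generalizing t with
  | zero => rcases s with _ | s <;> rcases t with _ | t <;> simp [Nat.choose_eq_zero_of_lt]
  | succ n ih =>
    rw [Nat.sum_antidiagonal_succ', Nat.choose_succ_succ (n + 1)]
    rcases t with _ | t
    · simpa using ih 0
    · simp only [Nat.choose_succ_succ' _ t, mul_add, sum_add_distrib, ih, Nat.choose_zero_succ,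
        mul_zero, zero_add]
      rfl

theorem Finset.sum_range_sum_range_eq_sum_antidiagonal {M : Type*} [AddCommMonoid M] {N : ℕ}
    (φ : ℕ → ℕ → M) (hφ : ∀ a b, N ≤ a + b → φ a b = 0) :
    ∑ a ∈ range N, ∑ b ∈ range N, φ a b = ∑ s ∈ range N, ∑ ij ∈ antidiagonal s, φ ij.1 ij.2 := by
  simp_rw [Nat.sum_antidiagonal_eq_sum_range_succ φ, sum_range_diag_flip]
  refine sum_congr rfl fun a _ => (sum_subset (range_subset_range.2 (Nat.sub_le N a)) ?_).symm
  intro b _ hb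
  exact hφ a b (by simp at hb; omega)

section Motzkin

theorem motzkin_eq_sum_range {n N : ℕ} (h : n < 2 * N) :
    motzkin n = ∑ k ∈ range N, n.choose (2 * k) * catalan k := by
  have key : ∀ M, n / 2 < M →
      ∑ k ∈ range M, n.choose (2 * k) * catalan k
        = ∑ k ∈ range (n / 2 + 1), n.choose (2 * k) * catalan k := fun M hM => by
    refine (sum_subset (range_subset_range.2 hM) fun k _ hk => ?_).symm
    rw [mem_range, not_lt] at hk
    rw [Nat.choose_eq_zero_of_lt (by omega), zero_mul]
  rw [motzkin, key (n + 1) (by omega), key N (by omega)]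

theorem motzkin_zero : motzkin 0 = 1 := by simp [motzkin]

theorem motzkin_one : motzkin 1 = 1 := by simp [motzkin, sum_range_succ]

theorem motzkin_succ_eq_one_add_sum {n N : ℕ} (h : n < 2 * N + 1) :
    motzkin (n + 1) = 1 + ∑ k ∈ range N, (n + 1).choose (2 * k + 2) * catalan (k + 1) := by
  rw [motzkin_eq_sum_range (N := N + 1) (by omega), sum_range_succ', add_comm]
  simp [mul_add]

theorem sum_antidiagonal_motzkin_mul_motzkin (n : ℕ) :
    ∑ ij ∈ antidiagonal n, motzkin ij.1 * motzkin ij.2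
      = ∑ s ∈ range (n + 1), (n + 1).choose (2 * s + 1) * catalan (s + 1) := by
  calc ∑ ij ∈ antidiagonal n, motzkin ij.1 * motzkin ij.2
      = ∑ ij ∈ antidiagonal n, ∑ a ∈ range (n + 1), ∑ b ∈ range (n + 1),
          catalan a * catalan b * (ij.1.choose (2 * a) * ij.2.choose (2 * b)) := by
        refine sum_congr rfl fun ij hij => ?_
        rw [HasAntidiagonal.mem_antidiagonal] at hij
        rw [motzkin_eq_sum_range (N := n + 1) (by omega),
          motzkin_eq_sum_range (N := n + 1) (by omega), sum_mul_sum]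
        exact sum_congr rfl fun a _ => sum_congr rfl fun b _ => by ring
    _ = ∑ a ∈ range (n + 1), ∑ b ∈ range (n + 1),
          catalan a * catalan b * (n + 1).choose (2 * (a + b) + 1) := by
        rw [sum_comm]
        refine sum_congr rfl fun a _ => ?_
        rw [sum_comm]
        refine sum_congr rfl fun b _ => ?_
        rw [← mul_sum, Nat.sum_antidiagonal_choose_mul_choose, mul_add]
    _ = ∑ s ∈ range (n + 1), ∑ ij ∈ antidiagonal s,
          catalan ij.1 * catalan ij.2 * (n + 1).choose (2 * (ij.1 + ij.2) + 1) :=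
        sum_range_sum_range_eq_sum_antidiagonal _ fun a b hab => by
          rw [Nat.choose_eq_zero_of_lt (by omega), mul_zero]
    _ = ∑ s ∈ range (n + 1), (n + 1).choose (2 * s + 1) * catalan (s + 1) := by
        refine sum_congr rfl fun s _ => ?_
        rw [catalan_succ', mul_sum]
        refine sum_congr rfl fun ij hij => ?_
        rw [HasAntidiagonal.mem_antidiagonal.1 hij, mul_comm]

theorem motzkin_succ_succ (n : ℕ) :
    motzkin (n + 2) = motzkin (n + 1) + ∑ ij ∈ antidiagonal n, motzkin ij.1 * motzkin ij.2 := by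
  rw [sum_antidiagonal_motzkin_mul_motzkin, motzkin_succ_eq_one_add_sum (N := n + 1) (by omega),
    motzkin_succ_eq_one_add_sum (N := n + 1) (by omega)]
  simp only [Nat.choose_succ_succ' (n + 1), add_mul, sum_add_distrib]
  ring

end Motzkin

section GeneratingSeries

noncomputable def motzkinSeries (R : Type*) [CommSemiring R] : R⟦X⟧ :=
  PowerSeries.mk fun n => (motzkin n : R)

theorem motzkinSeries_eq (R : Type*) [CommSemiring R] :
    motzkinSeries R = 1 + X * motzkinSeries R + X ^ 2 * motzkinSeries R ^ 2 := by
  ext (_ | _ | n)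
  · simp [motzkinSeries, motzkin_zero]
  · simp [motzkinSeries, motzkin_zero, motzkin_one, coeff_one, coeff_X_pow_mul']
  · rw [map_add, map_add, coeff_succ_X_mul, coeff_X_pow_mul', if_pos (by omega),
      show n + 1 + 1 - 2 = n from rfl, sq, coeff_mul]
    simp [motzkinSeries, motzkin_succ_succ, coeff_one]

variable (R : Type*) [CommRing R]

noncomputable def motzkinRoot : R⟦X⟧ := 1 - X - 2 * X ^ 2 * motzkinSeries R

theorem motzkinRoot_sq : motzkinRoot R ^ 2 = 1 - 2 * X - 3 * X ^ 2 := by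
  rw [motzkinRoot]
  linear_combination (-4 * X ^ 2 : R⟦X⟧) * motzkinSeries_eq R

theorem constantCoeff_motzkinRoot : constantCoeff (motzkinRoot R) = 1 := by
  simp [motzkinRoot]

theorem coeff_motzkinRoot_add_two (n : ℕ) :
    coeff (n + 2) (motzkinRoot R) = -2 * motzkin n := by
  rw [motzkinRoot, mul_assoc, ← map_ofNat C 2, map_sub, map_sub, coeff_C_mul, coeff_X_pow_mul']
  simp [coeff_X, coeff_one, motzkinSeries]

end GeneratingSeries

namespace PowerSeries

theorem coeff_pow_eq_coeff_trunc_pow {R : Type*} [CommSemiring R] (f : R⟦X⟧) (n a : ℕ) :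
    coeff n (f ^ a) = coeff n ((trunc (n + 1) f : R⟦X⟧) ^ a) := by
  rw [← coeff_coe_trunc_of_lt (Nat.lt_succ_self n), ← trunc_trunc_pow,
    coeff_coe_trunc_of_lt (Nat.lt_succ_self n)]

theorem expand_eq_pow_of_zmod {p : ℕ} [hp : Fact p.Prime] (f : (ZMod p)⟦X⟧) :
    expand p hp.out.ne_zero f = f ^ p := by
  ext n
  rw [coeff_pow_eq_coeff_trunc_pow, ← Polynomial.coe_pow, ← ZMod.expand_card,
    Polynomial.coeff_coe, Polynomial.coeff_expand hp.out.pos, coeff_expand, coeff_trunc,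
    if_pos (Nat.lt_succ_of_le (Nat.div_le_self n p))]

theorem coeff_one_add_C_mul_X_pow {R : Type*} [CommRing R] (a : R) (m n : ℕ) :
    coeff n ((1 + C a * X) ^ m) = a ^ n * m.choose n := by
  have : (1 + C a * X) ^ m = rescale a (((1 + Polynomial.X) ^ m : Polynomial R) : R⟦X⟧) := by
    simp [rescale_X]
  rw [this, coeff_rescale, Polynomial.coeff_coe, Polynomial.coeff_one_add_X_pow]

theorem sq_mul_sub_X_mul_derivative {R : Type*} [CommRing R] (f : R⟦X⟧) :
    2 * f ^ 2 * (f - X * d⁄dX R f) = f * (2 * f ^ 2 - X * d⁄dX R (f ^ 2)) := by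
  rw [Derivation.leibniz_pow]
  simp
  ring

noncomputable def cartier {R : Type*} [Semiring R] (p : ℕ) (f : R⟦X⟧) : R⟦X⟧ :=
  mk fun n => coeff (p * n) f

@[simp]
theorem coeff_cartier {R : Type*} [Semiring R] (p : ℕ) (f : R⟦X⟧) (n : ℕ) :
    coeff n (cartier p f) = coeff (p * n) f :=
  coeff_mk _ _

theorem cartier_expand_mul {R : Type*} [CommRing R] {p : ℕ} (hp : p ≠ 0) (f g : R⟦X⟧) :
    cartier p (expand p hp f * g) = f * cartier p g := by
  ext n
  simp only [coeff_cartier, coeff_mul]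
  refine (sum_of_injOn (fun ij => (p * ij.1, p * ij.2)) ?_ ?_ ?_ ?_).symm
  · intro x _ y _ hxy
    simpa [Prod.ext_iff, hp] using hxy
  · intro x hx
    simp only [mem_coe, HasAntidiagonal.mem_antidiagonal] at hx ⊢
    rw [← hx, mul_add]
  · -- if `p ∣ y.1` then also `p ∣ y.2`, and `y` lies in the image
    intro y hy hy'
    rw [coeff_expand_of_not_dvd p hp, zero_mul]
    rintro ⟨i, hi⟩
    rw [HasAntidiagonal.mem_antidiagonal] at hy
    have hin : i ≤ n :=
      Nat.le_of_mul_le_mul_left (hi ▸ hy ▸ Nat.le_add_right _ _) (Nat.pos_of_ne_zero hp)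
    refine hy' ⟨(i, n - i), by simp [hin], Prod.ext hi.symm ?_⟩
    dsimp only
    rw [Nat.mul_sub, ← hi, ← hy, Nat.add_sub_cancel_left]
  · intro x _
    simp

theorem sq_mul_cartier {p : ℕ} [hp : Fact p.Prime] (f : (ZMod p)⟦X⟧) :
    f ^ 2 * cartier p f = f * cartier p (f ^ (p + 1)) := by
  calc f ^ 2 * cartier p f = cartier p (expand p hp.out.ne_zero (f ^ 2) * f) :=
        (cartier_expand_mul _ _ _).symm
    _ = cartier p (expand p hp.out.ne_zero f * f ^ (p + 1)) := by
        rw [map_pow, expand_eq_pow_of_zmod]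
        congr 1
        ring
    _ = f * cartier p (f ^ (p + 1)) := cartier_expand_mul _ _ _

end PowerSeries

theorem ZMod.two_ne_zero_of_ne_two {p : ℕ} [Fact p.Prime] (hp2 : p ≠ 2) : (2 : ZMod p) ≠ 0 :=
  Ring.two_ne_zero (by rwa [ZMod.ringChar_zmod_n])

section Cartier

variable {p : ℕ} [hp : Fact p.Prime]

theorem motzkinRoot_sq_mul_sub_X_mul_derivative (hp2 : p ≠ 2) :
    motzkinRoot (ZMod p) ^ 2 * (motzkinRoot (ZMod p) - X * d⁄dX _ (motzkinRoot (ZMod p)))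
      = (1 - X) * motzkinRoot (ZMod p) := by
  have hd : d⁄dX (ZMod p) (1 - 2 * X - 3 * X ^ 2) = -2 - 6 * X := by
    have h2 : d⁄dX (ZMod p) 2 = 0 := by exact_mod_cast Derivation.map_natCast _ 2
    have h3 : d⁄dX (ZMod p) 3 = 0 := by exact_mod_cast Derivation.map_natCast _ 3
    simp [h2, h3]
    ring
  have h := sq_mul_sub_X_mul_derivative (motzkinRoot (ZMod p))
  rw [motzkinRoot_sq, hd] at h
  have h2 : (2 : (ZMod p)⟦X⟧) ≠ 0 := by
    rw [← map_ofNat C 2, map_ne_zero_iff _ C_injective]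
    exact ZMod.two_ne_zero_of_ne_two hp2
  refine mul_left_cancel₀ h2 ?_
  rw [← mul_assoc, motzkinRoot_sq, h]
  ring

variable (hp2 : p ≠ 2)
  (hΛ : cartier p ((1 - 2 * X - 3 * X ^ 2 : (ZMod p)⟦X⟧) ^ ((p + 1) / 2)) = 1 - X)
include hp2 hΛ

theorem cartier_motzkinRoot :
    cartier p (motzkinRoot (ZMod p))
      = motzkinRoot (ZMod p) - X * d⁄dX _ (motzkinRoot (ZMod p)) := by
  have hF : motzkinRoot (ZMod p) ≠ 0 := fun h => by
    simpa [h] using constantCoeff_motzkinRoot (ZMod p)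
  have hpow : motzkinRoot (ZMod p) ^ (p + 1) = (1 - 2 * X - 3 * X ^ 2) ^ ((p + 1) / 2) := by
    have : p + 1 = 2 * ((p + 1) / 2) := by
      obtain ⟨q, hq⟩ := hp.out.eq_two_or_odd'.resolve_left hp2
      omega
    conv_lhs => rw [this, pow_mul, motzkinRoot_sq]
  refine mul_left_cancel₀ (pow_ne_zero 2 hF) ?_
  rw [sq_mul_cartier, hpow, hΛ, motzkinRoot_sq_mul_sub_X_mul_derivative hp2, mul_comm]

theorem coeff_motzkinRoot_prime_mul (n : ℕ) :
    coeff (p * n) (motzkinRoot (ZMod p)) = (1 - n) * coeff n (motzkinRoot (ZMod p)) := by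
  rw [← coeff_cartier, cartier_motzkinRoot hp2 hΛ, map_sub]
  rcases n with _ | n
  · simp
  · rw [coeff_succ_X_mul, coeff_derivative]
    push_cast
    ring

theorem coeff_motzkinRoot_prime_pow {k : ℕ} (hk : 1 ≤ k) :
    coeff (p ^ k) (motzkinRoot (ZMod p)) = 0 := by
  induction k, hk using Nat.le_induction with
  | base => simpa using coeff_motzkinRoot_prime_mul hp2 hΛ 1
  | succ k _ ih => rw [pow_succ', coeff_motzkinRoot_prime_mul hp2 hΛ, ih, mul_zero]

theorem prime_dvd_motzkin_pow_sub_two {k : ℕ} (hk : 1 ≤ k) : p ∣ motzkin (p ^ k - 2) := by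
  have hpk : p ^ k - 2 + 2 = p ^ k :=
    Nat.sub_add_cancel (hp.out.two_le.trans (Nat.le_self_pow (by omega) p))
  have h := coeff_motzkinRoot_prime_pow hp2 hΛ hk
  rw [← hpk, coeff_motzkinRoot_add_two] at h
  rw [← ZMod.natCast_eq_zero_iff]
  exact (mul_eq_zero.1 h).resolve_left (neg_ne_zero.2 (ZMod.two_ne_zero_of_ne_two hp2))

end Cartier

-- `1 - 2X - 3X² = (1 + X)(1 - 3X)`, so the `X¹⁹`-coefficient of its tenth power is
-- `10 · 3¹⁰ - 10 · 3⁹ = 20 · 3⁹ ≡ -1 (mod 19)`, and it has no terms beyond `X²⁰`.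
theorem cartier_nineteen_pow_ten :
    cartier 19 ((1 - 2 * X - 3 * X ^ 2 : (ZMod 19)⟦X⟧) ^ 10) = 1 - X := by
  have hfac : (1 - 2 * X - 3 * X ^ 2 : (ZMod 19)⟦X⟧) = (1 + C 1 * X) * (1 + C (-3) * X) := by
    rw [map_one, map_neg, map_ofNat]
    ring
  ext n
  rw [coeff_cartier, hfac, mul_pow, coeff_mul]
  simp only [coeff_one_add_C_mul_X_pow, one_pow, one_mul]
  rcases n with _ | _ | n
  · simp
  · rw [map_sub, coeff_one, coeff_X]
    decide
  · rw [map_sub, coeff_one, coeff_X, if_neg (by omega), if_neg (by omega), sub_zero]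
    refine sum_eq_zero fun ij hij => ?_
    rw [HasAntidiagonal.mem_antidiagonal] at hij
    rcases le_or_gt ij.1 10 with h | h
    · rw [Nat.choose_eq_zero_of_lt (n := 10) (k := ij.2) (by omega), Nat.cast_zero, mul_zero,
        mul_zero]
    · rw [Nat.choose_eq_zero_of_lt h, Nat.cast_zero, zero_mul]

theorem motzkin_19pow_sub_two (k : ℕ) (hk : 1 ≤ k) :
    motzkin (19 ^ k - 2) % 19 = 0 := by
  have : Fact (Nat.Prime 19) := ⟨by norm_num⟩
  exact Nat.mod_eq_zero_of_dvd
    (prime_dvd_motzkin_pow_sub_two (by norm_num) cartier_nineteen_pow_ten hk)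
end
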